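/- There is a universal constant C > 0 with the following property. Let X be a Banach space, π an action of ℍ on X by linear isometric automorphisms, and f : ℍ → X a 1-Lipschitz 1-cocycle for π. Then for every m, n ∈ ℕ: ‖f(c^{n²}) − P_m f(c^{n²})‖ ≤ C · 2^{m/3} · n^{1/3}. -/

import Mathlib

/-!
Write `v = f(c^{n²})`. Since `c^j` and `c^{n²}` commute, the cocycle identity gives
`v - π(c^j) v = f(c^j) - π(c^{n²}) f(c^j)`, hence
`‖v - π(c)^j v‖ ≤ 2 min(‖v‖, ‖f(c^j)‖)`. Because `c` has quadratic distortion,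
the word length of `c^{n²}` is at most `4n` and that of `c^j` at most `12 √j`. Averaging over
`j < 2^m` bounds `‖v - P_m v‖` by `24 min(n, 2^{m/2}) ≤ 24 · n^{1/3} · 2^{m/3}`.
-/

open scoped BigOperators

/-- The discrete Heisenberg group `ℍ`, realized via the coordinates of the
3×3 upper-triangular integer matrices `[[1, x, z], [0, 1, y], [0, 0, 1]]`
with unit diagonal. -/
@[ext] structure Heis where
  x : ℤ
  y : ℤ
  z : ℤ

namespace Heis

instance : One Heis := ⟨⟨0, 0, 0⟩⟩
instance : Mul Heis := ⟨fun g h => ⟨g.x + h.x, g.y + h.y, g.z + h.z + g.x * h.y⟩⟩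
instance : Inv Heis := ⟨fun g => ⟨-g.x, -g.y, -g.z + g.x * g.y⟩⟩

@[simp] lemma mul_def (g h : Heis) :
    g * h = ⟨g.x + h.x, g.y + h.y, g.z + h.z + g.x * h.y⟩ := rfl
@[simp] lemma one_def : (1 : Heis) = ⟨0, 0, 0⟩ := rfl
@[simp] lemma inv_def (g : Heis) : g⁻¹ = ⟨-g.x, -g.y, -g.z + g.x * g.y⟩ := rfl

instance : Group Heis where
  mul_assoc g h k := by ext <;> simp <;> ring
  one_mul g := by ext <;> simp
  mul_one g := by ext <;> simp
  inv_mul_cancel g := by ext <;> simp <;> ring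

/-- The generator `a`. -/
def A : Heis := ⟨1, 0, 0⟩
/-- The generator `b`. -/
def B : Heis := ⟨0, 1, 0⟩
/-- The commutator `c = a * b * a⁻¹ * b⁻¹`, a central element. -/
def C : Heis := A * B * A⁻¹ * B⁻¹
/-- The symmetric generating set `S = {a, b, a⁻¹, b⁻¹}`. -/
def S : Set Heis := {A, B, A⁻¹, B⁻¹}

/-- The word length of `g` with respect to the generating set `S`. -/
noncomputable def wordLength (g : Heis) : ℕ :=
  sInf {n : ℕ | ∃ l : List Heis, l.length = n ∧ (∀ s ∈ l, s ∈ S) ∧ l.prod = g}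

/-- The left-invariant word metric `d_W` on `ℍ` associated to `S`. -/
noncomputable def dW (g h : Heis) : ℕ := wordLength (g⁻¹ * h)

end Heis

/-- The averaging operator `P_n = 2^{−n}·∑_{j<2^n} π(c)^j` associated to an action `π` of
`ℍ` by linear isometric automorphisms, where `c = aba⁻¹b⁻¹`. -/
noncomputable def Pop {X : Type*} [NormedAddCommGroup X] [NormedSpace ℝ X]
    (π : Heis →* (X ≃ₗᵢ[ℝ] X)) (n : ℕ) (v : X) : X :=
  ((2 : ℝ) ^ n)⁻¹ • ∑ j ∈ Finset.range (2 ^ n), (π Heis.C ^ j) v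

open Finset

lemma Real.min_le_rpow_mul_rpow {x y p q : ℝ} (hx : 0 ≤ x) (hy : 0 ≤ y) (hp : 0 ≤ p)
    (hq : 0 ≤ q) (hpq : p + q = 1) : min x y ≤ x ^ p * y ^ q :=
  calc min x y = min x y ^ p * min x y ^ q := by
        rw [← Real.rpow_add' (le_min hx hy) (by rw [hpq]; exact one_ne_zero), hpq,
          Real.rpow_one]
    _ ≤ x ^ p * y ^ q := by
        gcongr
        exacts [min_le_left x y, min_le_right x y]

lemma norm_sub_smul_sum_le_of_forall_norm_sub_le {ι E : Type*} [SeminormedAddCommGroup E]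
    [NormedSpace ℝ E] {s : Finset ι} (hs : s.Nonempty) {u : ι → E} {v : E} {M : ℝ}
    (h : ∀ i ∈ s, ‖v - u i‖ ≤ M) :
    ‖v - (#s : ℝ)⁻¹ • ∑ i ∈ s, u i‖ ≤ M := by
  have hcard : (0 : ℝ) < #s := by exact_mod_cast hs.card_pos
  have hmem : ∑ i ∈ s, (#s : ℝ)⁻¹ • u i ∈ Metric.closedBall v M :=
    (convex_closedBall v M).sum_mem (fun _ _ => by positivity)
      (by simp [hcard.ne'])
      (fun i hi => Metric.mem_closedBall'.2 (by simpa [dist_eq_norm] using h i hi))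
  rwa [← Finset.smul_sum, Metric.mem_closedBall', dist_eq_norm] at hmem

lemma norm_sub_map_le_two_mul {R X : Type*} [Semiring R] [SeminormedAddCommGroup X]
    [Module R X] (T : X ≃ₗᵢ[R] X) (x : X) : ‖x - T x‖ ≤ 2 * ‖x‖ :=
  calc ‖x - T x‖ ≤ ‖x‖ + ‖T x‖ := norm_sub_le x (T x)
    _ = 2 * ‖x‖ := by rw [T.norm_map, two_mul]

section Cocycle

variable {G R X : Type*} [Group G] [Semiring R] [SeminormedAddCommGroup X] [Module R X]
  {π : G →* (X ≃ₗᵢ[R] X)} {f : G → X}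

lemma cocycle_map_one (hf : ∀ g h, f (g * h) = π g (f h) + f g) : f 1 = 0 := by
  simpa using hf 1 1

lemma cocycle_sub_map_eq_of_commute (hf : ∀ g h, f (g * h) = π g (f h) + f g) {g h : G}
    (hgh : Commute g h) : f g - π h (f g) = f h - π g (f h) := by
  have := hf g h
  rw [hgh.eq, hf h g] at this
  rw [sub_eq_sub_iff_add_eq_add, add_comm, ← this, add_comm]

lemma norm_cocycle_sub_map_le_of_commute (hf : ∀ g h, f (g * h) = π g (f h) + f g)
    {g h : G} (hgh : Commute g h) : ‖f g - π h (f g)‖ ≤ 2 * min ‖f g‖ ‖f h‖ := by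
  rw [mul_min_of_nonneg _ _ zero_le_two]
  refine le_min (norm_sub_map_le_two_mul _ _) ?_
  rw [cocycle_sub_map_eq_of_commute hf hgh]
  exact norm_sub_map_le_two_mul _ _

end Cocycle

namespace Heis

lemma A_pow (k : ℕ) : A ^ k = ⟨k, 0, 0⟩ := by
  induction k with
  | zero => rfl
  | succ k ih => rw [pow_succ, ih]; ext <;> simp [A]

lemma B_pow (k : ℕ) : B ^ k = ⟨0, k, 0⟩ := by
  induction k with
  | zero => rfl
  | succ k ih => rw [pow_succ, ih]; ext <;> simp [B]

lemma C_pow (k : ℕ) : C ^ k = ⟨0, 0, k⟩ := by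
  induction k with
  | zero => rfl
  | succ k ih => rw [pow_succ, ih]; ext <;> simp [C, A, B]

lemma C_pow_sq (k : ℕ) : C ^ (k ^ 2) = A ^ k * B ^ k * (A ^ k)⁻¹ * (B ^ k)⁻¹ := by
  rw [A_pow, B_pow, C_pow]
  ext <;> simp
  ring

def HasWordOfLength (g : Heis) (n : ℕ) : Prop :=
  ∃ l : List Heis, l.length = n ∧ (∀ s ∈ l, s ∈ S) ∧ l.prod = g

lemma HasWordOfLength.wordLength_le {g : Heis} {n : ℕ} (h : HasWordOfLength g n) :
    wordLength g ≤ n :=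
  Nat.sInf_le h

lemma hasWordOfLength_one : HasWordOfLength 1 0 := ⟨[], rfl, by simp, rfl⟩

lemma hasWordOfLength_of_mem {s : Heis} (hs : s ∈ S) : HasWordOfLength s 1 :=
  ⟨[s], rfl, by simpa using hs, by simp⟩

lemma HasWordOfLength.mul {g h : Heis} {n k : ℕ} (hg : HasWordOfLength g n)
    (hh : HasWordOfLength h k) : HasWordOfLength (g * h) (n + k) := by
  obtain ⟨l, rfl, hl, rfl⟩ := hg
  obtain ⟨l', rfl, hl', rfl⟩ := hh
  exact ⟨l ++ l', by simp, by simpa using fun s hs => hs.elim (hl s) (hl' s), by simp⟩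

lemma HasWordOfLength.pow {g : Heis} {n : ℕ} (hg : HasWordOfLength g n) (k : ℕ) :
    HasWordOfLength (g ^ k) (k * n) := by
  induction k with
  | zero => simpa using hasWordOfLength_one
  | succ k ih => simpa [pow_succ, add_mul] using ih.mul hg

lemma hasWordOfLength_C_pow (r : ℕ) : HasWordOfLength (C ^ r) (4 * r) := by
  have hC : HasWordOfLength C 4 :=
    (((hasWordOfLength_of_mem (by simp [S])).mul (hasWordOfLength_of_mem (by simp [S]))).mul
      (hasWordOfLength_of_mem (by simp [S]))).mul (hasWordOfLength_of_mem (by simp [S]))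
  simpa [mul_comm] using hC.pow r

lemma hasWordOfLength_C_pow_sq (k : ℕ) : HasWordOfLength (C ^ (k ^ 2)) (4 * k) := by
  have h : ∀ s ∈ S, HasWordOfLength (s ^ k) k := fun s hs =>
    by simpa using (hasWordOfLength_of_mem hs).pow k
  rw [C_pow_sq, ← inv_pow, ← inv_pow]
  convert (((h A (by simp [S])).mul (h B (by simp [S]))).mul (h A⁻¹ (by simp [S]))).mul
    (h B⁻¹ (by simp [S])) using 1
  ring

lemma wordLength_C_pow_le (j : ℕ) : wordLength (C ^ j) ≤ 12 * Nat.sqrt j := by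
  set k := Nat.sqrt j
  have hk : k ^ 2 ≤ j := Nat.sqrt_le' j
  have hj : j < (k + 1) ^ 2 := Nat.lt_succ_sqrt' j
  have h := ((hasWordOfLength_C_pow_sq k).mul (hasWordOfLength_C_pow (j - k ^ 2))).wordLength_le
  rw [← pow_add, Nat.add_sub_cancel' hk] at h
  have hj' : j ≤ k ^ 2 + 2 * k := by nlinarith
  omega

section Lipschitz

variable {X : Type*} [SeminormedAddCommGroup X] {f : Heis → X} (hf : f 1 = 0)
  (hlip : ∀ g h : Heis, ‖f g - f h‖ ≤ (dW g h : ℝ))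
include hf hlip

lemma norm_le_wordLength (g : Heis) : ‖f g‖ ≤ wordLength g := by
  simpa [hf, dW, -one_def] using hlip 1 g

lemma norm_apply_C_pow_sq_le (n : ℕ) : ‖f (C ^ (n ^ 2))‖ ≤ 4 * n :=
  (norm_le_wordLength hf hlip _).trans
    (by exact_mod_cast (hasWordOfLength_C_pow_sq n).wordLength_le)

lemma norm_apply_C_pow_le (j : ℕ) : ‖f (C ^ j)‖ ≤ 12 * √(j : ℝ) :=
  calc ‖f (C ^ j)‖ ≤ 12 * Nat.sqrt j :=
        (norm_le_wordLength hf hlip _).trans (by exact_mod_cast wordLength_C_pow_le j)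
    _ ≤ 12 * √(j : ℝ) := by gcongr; exact Real.nat_sqrt_le_real_sqrt

end Lipschitz

end Heis

lemma norm_sub_Pop_le {X : Type*} [NormedAddCommGroup X] [NormedSpace ℝ X]
    {π : Heis →* (X ≃ₗᵢ[ℝ] X)} {m : ℕ} {v : X} {M : ℝ}
    (h : ∀ j < 2 ^ m, ‖v - (π Heis.C ^ j) v‖ ≤ M) : ‖v - Pop π m v‖ ≤ M := by
  have := norm_sub_smul_sum_le_of_forall_norm_sub_le (nonempty_range_iff.2 (by positivity))
    (fun j hj => h j (mem_range.1 hj))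
  simpa [Pop] using this

lemma sqrt_two_pow_rpow (m : ℕ) :
    √((2 : ℝ) ^ m) ^ ((2 : ℝ) / 3) = (2 : ℝ) ^ ((m : ℝ) / 3) := by
  rw [Real.sqrt_eq_rpow, ← Real.rpow_natCast, ← Real.rpow_mul zero_le_two,
    ← Real.rpow_mul zero_le_two]
  ring_nf

/-- **Lemma 4.3.** There is a universal `C > 0` such that: for every Banach space `X`,
action `π` of `ℍ` on `X` by linear isometric automorphisms, and `1`-Lipschitz `1`-cocycle
`f : ℍ → X`, for all `m, n ∈ ℕ` we have `‖f(c^{n²}) − P_m f(c^{n²})‖ ≤ C·2^{m/3}·n^{1/3}`. -/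
theorem heisenberg_cocycle_coboundary_bound :
    ∃ C : ℝ, 0 < C ∧
      ∀ (X : Type*) [NormedAddCommGroup X] [NormedSpace ℝ X] [CompleteSpace X],
        ∀ (π : Heis →* (X ≃ₗᵢ[ℝ] X)) (f : Heis → X),
          (∀ g h : Heis, f (g * h) = π g (f h) + f g) →
          (∀ g h : Heis, ‖f g - f h‖ ≤ (Heis.dW g h : ℝ)) →
          ∀ m n : ℕ, 1 ≤ m → 1 ≤ n →
            ‖f (Heis.C ^ (n ^ 2)) - Pop π m (f (Heis.C ^ (n ^ 2)))‖ ≤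
              C * (2 : ℝ) ^ ((m : ℝ) / 3) * (n : ℝ) ^ ((1 : ℝ) / 3) := by
  refine ⟨24, by norm_num, fun X _ _ _ π f hf hlip m n _ _ => ?_⟩
  have hf1 := cocycle_map_one hf
  set v := f (Heis.C ^ (n ^ 2))
  have hv : ‖v‖ ≤ 4 * n := Heis.norm_apply_C_pow_sq_le hf1 hlip n
  have hterm :
      ∀ j < 2 ^ m, ‖v - (π Heis.C ^ j) v‖ ≤ 24 * min (n : ℝ) √((2 : ℝ) ^ m) := by
    intro j hj
    have hfj : ‖f (Heis.C ^ j)‖ ≤ 12 * √((2 : ℝ) ^ m) :=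
      (Heis.norm_apply_C_pow_le hf1 hlip j).trans
        (by gcongr; exact_mod_cast hj.le)
    rw [← map_pow, mul_min_of_nonneg _ _ (by norm_num)]
    refine (norm_cocycle_sub_map_le_of_commute hf (Commute.pow_pow_self _ _ _)).trans ?_
    rw [mul_min_of_nonneg _ _ zero_le_two]
    exact min_le_min (by linarith) (by linarith)
  calc ‖v - Pop π m v‖ ≤ 24 * min (n : ℝ) √((2 : ℝ) ^ m) := norm_sub_Pop_le hterm
    _ ≤ 24 * ((n : ℝ) ^ ((1 : ℝ) / 3) * √((2 : ℝ) ^ m) ^ ((2 : ℝ) / 3)) := by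
      gcongr
      exact Real.min_le_rpow_mul_rpow (by positivity) (by positivity) (by norm_num)
        (by norm_num) (by norm_num)
    _ = 24 * (2 : ℝ) ^ ((m : ℝ) / 3) * (n : ℝ) ^ ((1 : ℝ) / 3) := by
      rw [sqrt_two_pow_rpow]
      ring
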